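/- Let 0 < ε ≤ 0.15. For every integer k with 1 ≤ k ≤ 16, every real σ with 1 < σ ≤ 1 + ε, and every real t ≥ 1, one has Σ_k(σ,t) ≤ Σ_k(1+ε, 1). (Indeed Σ_k(σ,t) is decreasing in t for t ≥ 1 at fixed σ, and Σ_k(σ,1) is increasing in σ on 1 ≤ σ ≤ 1.15.) -/

import Mathlib

/-- `κ = 1/√5`. -/
noncomputable def κ : ℝ := 1 / Real.sqrt 5

/-- `σ₁(σ) = (1 + √(1 + 4σ²))/2`. -/
noncomputable def σ₁ (σ : ℝ) : ℝ := (1 + Real.sqrt (1 + 4 * σ ^ 2)) / 2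

/-- `Σ_k(σ,t)`. -/
noncomputable def Sigk (k : ℕ) (σ t : ℝ) : ℝ :=
  σ / (σ ^ 2 + k ^ 2 * t ^ 2) + (σ - 1) / ((σ - 1) ^ 2 + k ^ 2 * t ^ 2) -
    κ * σ₁ σ / ((σ₁ σ) ^ 2 + k ^ 2 * t ^ 2) -
    κ * (σ₁ σ - 1) / ((σ₁ σ - 1) ^ 2 + k ^ 2 * t ^ 2)

/-!
With `a = k²t²` and `P_a(y) = y/(y² + a) + (y - 1)/((y - 1)² + a)` one has
`Σ_k(σ,t) = P_a(σ) - κ P_a(g)`, where `g = σ₁(σ)` solves `g² - g = σ²` and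
`2g - 1 = √(1 + 4σ²) ∈ [2σ, √5 σ]`; for `σ ∈ [1, 1.15]` also `g ∈ [1.61, 1.76]`.
Since `t ↦ k²t²` is increasing, both claims are sign conditions on a partial derivative, in `a`
or in `σ`. Using the relations above (`κ(2g - 1) ≤ σ`, `κ g' ≤ κ`), each reduces to rational
inequalities in `(g, a)` or `(σ, a)` on a box `[u, v] × [1, ∞)`. Cleared of denominators, these
are polynomials in `a - 1` whose coefficients are nonnegative on `[u, v]`, which `nlinarith`
certifies from products of `(g - u)(v - g) ≥ 0`.
-/

open Set

noncomputable def pairSum (a y : ℝ) : ℝ := y / (y ^ 2 + a) + (y - 1) / ((y - 1) ^ 2 + a)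

noncomputable def Sig (a σ : ℝ) : ℝ := pairSum a σ - κ * pairSum a (σ₁ σ)

lemma Sigk_eq_Sig (k : ℕ) (σ t : ℝ) : Sigk k σ t = Sig (k ^ 2 * t ^ 2) σ := by
  simp only [Sigk, Sig, pairSum]
  ring

noncomputable def pairSumDerivParam (a y : ℝ) : ℝ :=
  y / (y ^ 2 + a) ^ 2 + (y - 1) / ((y - 1) ^ 2 + a) ^ 2

noncomputable def pairSumDeriv (a y : ℝ) : ℝ :=
  (a - y ^ 2) / (y ^ 2 + a) ^ 2 + (a - (y - 1) ^ 2) / ((y - 1) ^ 2 + a) ^ 2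

lemma hasDerivAt_pairSum_param {a : ℝ} (ha : 0 < a) (y : ℝ) :
    HasDerivAt (fun b => pairSum b y) (-pairSumDerivParam a y) a := by
  have term (z : ℝ) : HasDerivAt (fun b => z / (z ^ 2 + b)) (-z / (z ^ 2 + a) ^ 2) a := by
    refine ((hasDerivAt_const a z).div ((hasDerivAt_id a).const_add (z ^ 2))
      (by positivity)).congr_deriv ?_
    simp
  refine ((term y).add (term (y - 1))).congr_deriv ?_
  simp only [pairSumDerivParam]
  ring

lemma hasDerivAt_pairSum {a : ℝ} (ha : 0 < a) (y : ℝ) :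
    HasDerivAt (pairSum a) (pairSumDeriv a y) y := by
  have term (z : ℝ) :
      HasDerivAt (fun w => w / (w ^ 2 + a)) ((a - z ^ 2) / (z ^ 2 + a) ^ 2) z := by
    refine ((hasDerivAt_id z).div ((hasDerivAt_pow 2 z).add_const a)
      (by positivity)).congr_deriv ?_
    simp only [one_mul, id_eq, Nat.cast_ofNat, Nat.add_one_sub_one, pow_one]
    ring
  exact (term y).add ((term (y - 1)).comp_sub_const y 1)

lemma σ₁_sq_sub_self (x : ℝ) : σ₁ x ^ 2 - σ₁ x = x ^ 2 := by
  have := Real.sq_sqrt (by positivity : (0 : ℝ) ≤ 1 + 4 * x ^ 2)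
  simp only [σ₁]
  linear_combination this / 4

lemma two_mul_σ₁_sub_one (x : ℝ) : 2 * σ₁ x - 1 = √(1 + 4 * x ^ 2) := by
  simp only [σ₁]
  ring

lemma hasDerivAt_σ₁ (x : ℝ) : HasDerivAt σ₁ (2 * x / (2 * σ₁ x - 1)) x := by
  have hpos : 0 < 1 + 4 * x ^ 2 := by positivity
  have := (((hasDerivAt_pow 2 x).const_mul 4).const_add 1).sqrt hpos.ne' |>.const_add 1
    |>.div_const 2
  refine this.congr_deriv ?_
  rw [two_mul_σ₁_sub_one]
  field_simp
  ring

lemma two_mul_le_two_mul_σ₁_sub_one (x : ℝ) : 2 * x ≤ 2 * σ₁ x - 1 := by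
  rw [two_mul_σ₁_sub_one]
  exact Real.le_sqrt_of_sq_le (by nlinarith)

lemma κ_mul_two_mul_σ₁_sub_one_le {x : ℝ} (hx : 1 ≤ x) : κ * (2 * σ₁ x - 1) ≤ x := by
  have h5 : (0 : ℝ) < √5 := by positivity
  rw [two_mul_σ₁_sub_one, κ, one_div_mul_eq_div, div_le_iff₀ h5]
  calc √(1 + 4 * x ^ 2) ≤ √(5 * x ^ 2) := Real.sqrt_le_sqrt (by nlinarith)
    _ = x * √5 := by rw [Real.sqrt_mul' _ (sq_nonneg x), Real.sqrt_sq (by linarith), mul_comm]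

lemma σ₁_mem_Icc {x : ℝ} (hx₁ : 1 ≤ x) (hx₂ : x ≤ 1.15) : σ₁ x ∈ Icc 1.61 1.76 := by
  have hs := Real.sq_sqrt (by positivity : (0 : ℝ) ≤ 1 + 4 * x ^ 2)
  have := Real.sqrt_nonneg (1 + 4 * x ^ 2)
  simp only [σ₁, mem_Icc]
  constructor <;> nlinarith

lemma κ_pos : 0 < κ := by
  unfold κ
  positivity

lemma κ_le : κ ≤ 46 / 100 := by
  rw [κ, div_le_div_iff₀ (by positivity) (by norm_num)]
  nlinarith [Real.sq_sqrt (by norm_num : (0 : ℝ) ≤ 5), Real.sqrt_nonneg 5]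

lemma pairSumDerivParam_le {g a : ℝ} (hg₁ : 1.61 ≤ g) (hg₂ : g ≤ 1.76) (ha : 1 ≤ a) :
    pairSumDerivParam a g ≤ (2 * g - 1) / (g ^ 2 - g + a) ^ 2 := by
  have h₁ : (0 : ℝ) ≤ g - 1.61 := by linarith
  have h₂ : (0 : ℝ) ≤ 1.76 - g := by linarith
  have hm : (0 : ℝ) ≤ a - 1 := by linarith
  have hgg := mul_nonneg h₁ h₂
  have c₀ : (0 : ℝ) ≤ -2*g^7 + 7*g^6 - 9*g^5 + 5*g^4 + 5*g^3 - 9*g^2 + 9*g - 3 := by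
    nlinarith [mul_nonneg hgg hgg, mul_nonneg (mul_nonneg hgg hgg) hgg, mul_nonneg h₁ h₁,
      mul_nonneg h₂ h₂]
  have c₁ : (0 : ℝ) ≤ 12*g^3 - 18*g^2 + 22*g - 8 := by nlinarith
  have c₂ : (0 : ℝ) ≤ 6*g^3 - 9*g^2 + 17*g - 7 := by nlinarith
  have c₃ : (0 : ℝ) ≤ 4*g - 2 := by linarith
  have d₁ : (0 : ℝ) < g^2 - g + a := by nlinarith
  rw [pairSumDerivParam, div_add_div _ _ (by positivity) (by positivity),
    div_le_div_iff₀ (by positivity) (by positivity)]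
  nlinarith [mul_nonneg c₁ hm, mul_nonneg c₂ (mul_nonneg hm hm),
    mul_nonneg c₃ (mul_nonneg (mul_nonneg hm hm) hm)]

lemma pairSumDeriv_nonneg {g a : ℝ} (hg₁ : 1.61 ≤ g) (hg₂ : g ≤ 1.76) (ha : 1 ≤ a) :
    0 ≤ pairSumDeriv a g := by
  have h₁ : (0 : ℝ) ≤ g - 1.61 := by linarith
  have h₂ : (0 : ℝ) ≤ 1.76 - g := by linarith
  have hm : (0 : ℝ) ≤ a - 1 := by linarith
  have hgg := mul_nonneg h₁ h₂
  have c₀ : (0 : ℝ) ≤ -2*g^6 + 6*g^5 - 9*g^4 + 8*g^3 + 3*g^2 - 6*g + 4 := by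
    nlinarith [mul_nonneg hgg hgg, mul_nonneg (mul_nonneg hgg hgg) hgg]
  have c₁ : (0 : ℝ) ≤ -2*g^4 + 4*g^3 + 6*g^2 - 8*g + 9 := by nlinarith [mul_nonneg hgg hgg]
  have c₂ : (0 : ℝ) ≤ 2*g^2 - 2*g + 7 := by nlinarith
  rw [pairSumDeriv, div_add_div _ _ (by positivity) (by positivity)]
  apply div_nonneg _ (by positivity)
  nlinarith [mul_nonneg c₁ hm, mul_nonneg c₂ (mul_nonneg hm hm),
    mul_nonneg (mul_nonneg hm hm) hm]

lemma mul_pairSumDeriv_le {g a : ℝ} (hg₁ : 1.61 ≤ g) (hg₂ : g ≤ 1.76) (ha : 1 ≤ a) :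
    46 / 100 * pairSumDeriv a g ≤ 13 / 10 * ((a - 1 / 2) / (a + 1 / 2) ^ 2) := by
  have h₁ : (0 : ℝ) ≤ g - 1.61 := by linarith
  have h₂ : (0 : ℝ) ≤ 1.76 - g := by linarith
  have hm : (0 : ℝ) ≤ a - 1 := by linarith
  have hgg := mul_nonneg h₁ h₂
  have hgg2 := mul_nonneg hgg hgg
  have c₀ : (0 : ℝ) ≤ (13/20)*g^8 - (13/5)*g^7 + (857/100)*g^6 - (1661/100)*g^5
      + (4593/200)*g^4 - (532/25)*g^3 + (1459/200)*g^2 + (101/100)*g - (77/50) := by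
    nlinarith [mul_nonneg hgg2 hgg, mul_nonneg hgg2 hgg2]
  have c₁ : (0 : ℝ) ≤ (13/10)*g^8 - (26/5)*g^7 + (459/25)*g^6 - (922/25)*g^5
      + (5869/100)*g^4 - (3099/50)*g^3 + (651/20)*g^2 - (171/25)*g - (367/200) := by
    nlinarith [mul_nonneg hgg2 hgg, mul_nonneg hgg2 hgg2]
  have c₂ : (0 : ℝ) ≤ (153/25)*g^6 - (459/25)*g^5 + (223/5)*g^4 - (293/5)*g^3
      + (4677/100)*g^2 - (2053/100)*g + (509/200) := by
    nlinarith [mul_nonneg hgg2 hgg]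
  have c₃ : (0 : ℝ) ≤ (218/25)*g^4 - (436/25)*g^3 + (642/25)*g^2 - (424/25)*g + (493/100) := by
    nlinarith
  have c₄ : (0 : ℝ) ≤ (107/25)*g^2 - (107/25)*g + (247/100) := by nlinarith
  have hm2 := mul_nonneg hm hm
  rw [pairSumDeriv, div_add_div _ _ (by positivity) (by positivity), ← mul_div_assoc,
    ← mul_div_assoc, div_le_div_iff₀ (by positivity) (by positivity)]
  nlinarith [mul_nonneg c₁ hm, mul_nonneg c₂ hm2, mul_nonneg c₃ (mul_nonneg hm2 hm),
    mul_nonneg c₄ (mul_nonneg hm2 hm2), mul_nonneg (mul_nonneg hm2 hm2) hm]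

lemma le_pairSumDeriv {x a : ℝ} (hx₁ : 1 ≤ x) (hx₂ : x ≤ 1.15) (ha : 1 ≤ a) :
    13 / 10 * ((a - 1 / 2) / (a + 1 / 2) ^ 2) ≤ pairSumDeriv a x := by
  have h₁ : (0 : ℝ) ≤ x - 1 := by linarith
  have h₂ : (0 : ℝ) ≤ 1.15 - x := by linarith
  have hm : (0 : ℝ) ≤ a - 1 := by linarith
  have hxx := mul_nonneg h₁ h₂
  have hxx2 := mul_nonneg hxx hxx
  have c₀ : (0 : ℝ) ≤ -(13/20)*x^8 + (13/5)*x^7 - 11*x^6 + (239/10)*x^5 - (339/10)*x^4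
      + 31*x^3 - (73/20)*x^2 - (83/10)*x + (32/5) := by
    nlinarith [mul_nonneg hxx2 hxx, mul_nonneg hxx2 hxx2]
  have c₁ : (0 : ℝ) ≤ -(13/10)*x^8 + (26/5)*x^7 - (108/5)*x^6 + (233/5)*x^5 - (757/10)*x^4
      + (399/5)*x^3 - (102/5)*x^2 - (63/5)*x + (77/4) := by
    nlinarith [mul_nonneg hxx2 hxx, mul_nonneg hxx2 hxx2]
  have c₂ : (0 : ℝ) ≤ -(36/5)*x^6 + (108/5)*x^5 - (527/10)*x^4 + (347/5)*x^3 - 33*x^2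
      + (19/10)*x + (227/10) := by
    nlinarith [mul_nonneg hxx2 hxx]
  have c₃ : (0 : ℝ) ≤ -(49/5)*x^4 + (98/5)*x^3 - (96/5)*x^2 + (47/5)*x + (137/10) := by
    nlinarith
  have c₄ : (0 : ℝ) ≤ -(16/5)*x^2 + (16/5)*x + (91/20) := by nlinarith
  have hm2 := mul_nonneg hm hm
  rw [pairSumDeriv, div_add_div _ _ (by positivity) (by positivity), ← mul_div_assoc,
    div_le_div_iff₀ (by positivity) (by positivity)]
  nlinarith [mul_nonneg c₁ hm, mul_nonneg c₂ hm2, mul_nonneg c₃ (mul_nonneg hm2 hm),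
    mul_nonneg c₄ (mul_nonneg hm2 hm2), mul_nonneg (mul_nonneg hm2 hm2) hm]

lemma Sig_antitoneOn {x : ℝ} (hx₁ : 1 ≤ x) (hx₂ : x ≤ 1.15) :
    AntitoneOn (fun a => Sig a x) (Ici 1) := by
  set g := σ₁ x
  obtain ⟨hg₁, hg₂⟩ := σ₁_mem_Icc hx₁ hx₂
  have hderiv (a : ℝ) (ha : 1 ≤ a) : HasDerivAt (fun b => Sig b x)
      (κ * pairSumDerivParam a g - pairSumDerivParam a x) a := by
    have ha₀ : 0 < a := by linarith
    refine ((hasDerivAt_pairSum_param ha₀ x).sub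
      ((hasDerivAt_pairSum_param ha₀ g).const_mul κ)).congr_deriv ?_
    ring
  refine antitoneOn_of_hasDerivWithinAt_nonpos (convex_Ici 1)
    (fun a ha => (hderiv a ha).continuousAt.continuousWithinAt)
    (fun a ha => (hderiv a (interior_subset ha)).hasDerivWithinAt) fun a ha => ?_
  have ha : 1 ≤ a := interior_subset ha
  have hx₀ : 0 < x ^ 2 + a := by positivity
  rw [sub_nonpos]
  calc κ * pairSumDerivParam a g ≤ κ * ((2 * g - 1) / (g ^ 2 - g + a) ^ 2) :=
        mul_le_mul_of_nonneg_left (pairSumDerivParam_le hg₁ hg₂ ha) κ_pos.le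
    _ = κ * (2 * g - 1) / (x ^ 2 + a) ^ 2 := by rw [σ₁_sq_sub_self, mul_div_assoc]
    _ ≤ x / (x ^ 2 + a) ^ 2 := by gcongr; exact κ_mul_two_mul_σ₁_sub_one_le hx₁
    _ ≤ pairSumDerivParam a x :=
        le_add_of_nonneg_right (div_nonneg (by linarith) (by positivity))

lemma Sig_monotoneOn {a : ℝ} (ha : 1 ≤ a) : MonotoneOn (fun x => Sig a x) (Icc 1 1.15) := by
  have ha₀ : 0 < a := by linarith
  have hderiv (x : ℝ) : HasDerivAt (fun y => Sig a y)
      (pairSumDeriv a x - κ * (pairSumDeriv a (σ₁ x) * (2 * x / (2 * σ₁ x - 1)))) x :=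
    (hasDerivAt_pairSum ha₀ x).sub
      (((hasDerivAt_pairSum ha₀ (σ₁ x)).comp x (hasDerivAt_σ₁ x)).const_mul κ)
  refine monotoneOn_of_hasDerivWithinAt_nonneg (convex_Icc 1 1.15)
    (fun x _ => (hderiv x).continuousAt.continuousWithinAt)
    (fun x _ => (hderiv x).hasDerivWithinAt) fun x hx => ?_
  obtain ⟨hx₁, hx₂⟩ := interior_subset hx
  obtain ⟨hg₁, hg₂⟩ := σ₁_mem_Icc hx₁ hx₂
  have hD := pairSumDeriv_nonneg hg₁ hg₂ ha
  have hslope : 2 * x / (2 * σ₁ x - 1) ≤ 1 :=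
    div_le_one_of_le₀ (two_mul_le_two_mul_σ₁_sub_one x) (by linarith)
  rw [sub_nonneg]
  -- `13/10 · (a - 1/2)/(a + 1/2)²` is a comparison function separating the two sides
  calc κ * (pairSumDeriv a (σ₁ x) * (2 * x / (2 * σ₁ x - 1)))
      ≤ κ * pairSumDeriv a (σ₁ x) :=
        mul_le_mul_of_nonneg_left (mul_le_of_le_one_right hD hslope) κ_pos.le
    _ ≤ 46 / 100 * pairSumDeriv a (σ₁ x) := mul_le_mul_of_nonneg_right κ_le hD
    _ ≤ 13 / 10 * ((a - 1 / 2) / (a + 1 / 2) ^ 2) := mul_pairSumDeriv_le hg₁ hg₂ ha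
    _ ≤ pairSumDeriv a x := le_pairSumDeriv hx₁ hx₂ ha

lemma Sigk_antitoneOn {k : ℕ} (hk : 1 ≤ k) {σ : ℝ} (hσ₁ : 1 ≤ σ) (hσ₂ : σ ≤ 1.15) :
    AntitoneOn (fun t => Sigk k σ t) (Ici 1) := by
  have hk' : (1 : ℝ) ≤ k := by exact_mod_cast hk
  simp only [Sigk_eq_Sig]
  refine (Sig_antitoneOn hσ₁ hσ₂).comp_MonotoneOn (f := fun t : ℝ => (k : ℝ) ^ 2 * t ^ 2)
    (fun s hs t ht hst => ?_) (fun t ht => ?_)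
  · have : (0 : ℝ) ≤ s := zero_le_one.trans hs
    dsimp only
    gcongr
  · simp only [mem_Ici] at ht ⊢
    nlinarith [one_le_pow₀ (n := 2) hk', one_le_pow₀ (n := 2) ht]

lemma Sigk_monotoneOn {k : ℕ} (hk : 1 ≤ k) :
    MonotoneOn (fun σ => Sigk k σ 1) (Icc 1 1.15) := by
  simpa only [Sigk_eq_Sig, one_pow, mul_one] using
    Sig_monotoneOn (one_le_pow₀ (n := 2) (by exact_mod_cast hk : (1 : ℝ) ≤ k))

theorem Sigk_le_general (ε : ℝ) (hε' : ε ≤ 0.15) :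
    (∀ k : ℕ, 1 ≤ k → k ≤ 16 → ∀ σ t : ℝ, 1 < σ → σ ≤ 1 + ε → 1 ≤ t →
      Sigk k σ t ≤ Sigk k (1 + ε) 1) ∧
    (∀ k : ℕ, 1 ≤ k → k ≤ 16 → ∀ σ : ℝ, 1 < σ → σ ≤ 1 + ε →
      AntitoneOn (fun t => Sigk k σ t) (Set.Ici 1)) ∧
    (∀ k : ℕ, 1 ≤ k → k ≤ 16 →
      MonotoneOn (fun σ => Sigk k σ 1) (Set.Icc 1 1.15)) := by
  have hε : 1 + ε ≤ 1.15 := by norm_num at hε' ⊢; linarith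
  refine ⟨fun k hk _ σ t hσ₁ hσ₂ ht => ?_, fun k hk _ σ hσ₁ hσ₂ =>
    Sigk_antitoneOn hk hσ₁.le (hσ₂.trans hε), fun k hk _ => Sigk_monotoneOn hk⟩
  calc Sigk k σ t ≤ Sigk k σ 1 :=
        Sigk_antitoneOn hk hσ₁.le (hσ₂.trans hε) self_mem_Ici ht ht
    _ ≤ Sigk k (1 + ε) 1 :=
        Sigk_monotoneOn hk ⟨hσ₁.le, hσ₂.trans hε⟩ ⟨by linarith, hε⟩ hσ₂

/-- For `0 < ε ≤ 0.15`, `1 ≤ k ≤ 16`, `1 < σ ≤ 1 + ε` and `t ≥ 1`: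
`Σ_k(σ,t) ≤ Σ_k(1+ε,1)`; indeed `Σ_k(σ,·)` is decreasing on `t ≥ 1` at fixed
`σ`, and `Σ_k(·,1)` is increasing on `1 ≤ σ ≤ 1.15`. -/
theorem Sigk_le (ε : ℝ) (hε : 0 < ε) (hε' : ε ≤ 0.15) :
    (∀ k : ℕ, 1 ≤ k → k ≤ 16 → ∀ σ t : ℝ, 1 < σ → σ ≤ 1 + ε → 1 ≤ t →
      Sigk k σ t ≤ Sigk k (1 + ε) 1) ∧
    (∀ k : ℕ, 1 ≤ k → k ≤ 16 → ∀ σ : ℝ, 1 < σ → σ ≤ 1 + ε →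
      AntitoneOn (fun t => Sigk k σ t) (Set.Ici 1)) ∧
    (∀ k : ℕ, 1 ≤ k → k ≤ 16 →
      MonotoneOn (fun σ => Sigk k σ 1) (Set.Icc 1 1.15)) :=
  Sigk_le_general ε hε'
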